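/- Let ρ_0 = N(0,1) on ℝ, M, L ≥ 2, and let g be as in the counterexample (g'(x) = -Mx for |x|≤L, g'(x)=x∓(M+1)L for x>L resp. x<-L; g''=-M on (-L,L), g''=1 outside [-L,L]). Then the quantity D := -E_{ρ_0}[(-1 + g''(X))²] - 2E_{ρ_0}[g''(X)(-X + g'(X))²] satisfies D ≥ -(M+1)² + 2M(M+1)²E[X²1{|X|≤L}] - 4(M+1)²L²P(X>L) > (M-2)(M+1)² ≥ 0, where X ∼ N(0,1). -/

import Mathlib

/-!
Off `[-L, L]` we have `g'' = 1` and `(-x + g' x)² = (M + 1)²L²`, while on `[-L, L]` both integrands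
are explicit multiples of `φ` and `x²φ`; by symmetry this gives exactly
`D = -(M+1)² P(|X| ≤ L) + 2M(M+1)² E[X²1{|X|≤L}] - 4(M+1)²L² P(X > L)`, and `P(|X| ≤ L) ≤ 1`.
The two Gaussian estimates come from Mills' inequality `L P(X > L) ≤ φ(L)`, the integration by
parts `E[X²1{|X|≤L}] = 1 - 2P(X > L) - 2Lφ(L)`, and `Lφ(L) ≤ 2φ(2) < 1/5` for `L ≥ 2`.
-/

open Real MeasureTheory

/-- Standard Gaussian density on `ℝ`. -/
noncomputable def stdGaussDensity (x : ℝ) : ℝ :=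
  (Real.sqrt (2 * Real.pi))⁻¹ * Real.exp (-x ^ 2 / 2)

open Set Filter Topology

lemma stdGaussDensity_eq_gaussianPDFReal :
    stdGaussDensity = ProbabilityTheory.gaussianPDFReal 0 1 := by
  ext x
  simp [stdGaussDensity, ProbabilityTheory.gaussianPDFReal]

lemma stdGaussDensity_nonneg (x : ℝ) : 0 ≤ stdGaussDensity x := by
  unfold stdGaussDensity; positivity

lemma stdGaussDensity_neg (x : ℝ) : stdGaussDensity (-x) = stdGaussDensity x := by
  simp [stdGaussDensity]

lemma continuous_stdGaussDensity : Continuous stdGaussDensity := by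
  unfold stdGaussDensity; fun_prop

lemma integrable_stdGaussDensity : Integrable stdGaussDensity := by
  rw [stdGaussDensity_eq_gaussianPDFReal]
  exact ProbabilityTheory.integrable_gaussianPDFReal 0 1

lemma integral_stdGaussDensity : ∫ x, stdGaussDensity x = 1 := by
  rw [stdGaussDensity_eq_gaussianPDFReal]
  exact ProbabilityTheory.integral_gaussianPDFReal_eq_one 0 one_ne_zero

lemma hasDerivAt_stdGaussDensity (x : ℝ) :
    HasDerivAt stdGaussDensity (-(x * stdGaussDensity x)) x := by
  have hq : HasDerivAt (fun y : ℝ => -y ^ 2 / 2) (-x) x :=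
    ((hasDerivAt_pow 2 x).neg.div_const 2).congr_deriv (by ring)
  exact (hq.exp.const_mul (√(2 * π))⁻¹).congr_deriv (by rw [stdGaussDensity]; ring)

lemma tendsto_stdGaussDensity_atTop : Tendsto stdGaussDensity atTop (𝓝 0) := by
  have h : Tendsto (fun x : ℝ => -x ^ 2 / 2) atTop atBot :=
    (tendsto_neg_atTop_atBot.comp (tendsto_pow_atTop two_ne_zero)).atBot_div_const two_pos
  have := (tendsto_exp_atBot.comp h).const_mul (√(2 * π))⁻¹
  rw [mul_zero] at this
  exact this

lemma integrable_mul_stdGaussDensity : Integrable fun x => x * stdGaussDensity x := by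
  refine ((integrable_mul_exp_neg_mul_sq one_half_pos).const_mul (√(2 * π))⁻¹).congr
    (Eventually.of_forall fun x => ?_)
  simp only [stdGaussDensity]; ring_nf

lemma setIntegral_Ioi_mul_stdGaussDensity (a : ℝ) :
    ∫ x in Ioi a, x * stdGaussDensity x = stdGaussDensity a := by
  have h := integral_Ioi_of_hasDerivAt_of_tendsto' (a := a) (f := fun x => -stdGaussDensity x)
    (fun x _ => (hasDerivAt_stdGaussDensity x).neg.congr_deriv (neg_neg _))
    integrable_mul_stdGaussDensity.integrableOn
    (by simpa using tendsto_stdGaussDensity_atTop.neg)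
  simpa using h

-- Mills' inequality
lemma mul_setIntegral_Ioi_stdGaussDensity_le (a : ℝ) :
    a * ∫ x in Ioi a, stdGaussDensity x ≤ stdGaussDensity a := by
  rw [← integral_const_mul, ← setIntegral_Ioi_mul_stdGaussDensity a]
  exact setIntegral_mono_on (integrable_stdGaussDensity.integrableOn.const_mul a)
    integrable_mul_stdGaussDensity.integrableOn measurableSet_Ioi
    fun x hx => mul_le_mul_of_nonneg_right (le_of_lt hx) (stdGaussDensity_nonneg x)

lemma mul_stdGaussDensity_le {a : ℝ} (ha : 2 ≤ a) :
    a * stdGaussDensity a ≤ 2 * stdGaussDensity 2 := by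
  have hgrowth : a / 2 ≤ exp ((a ^ 2 - 4) / 2) := by
    nlinarith [add_one_le_exp ((a ^ 2 - 4) / 2)]
  have hsplit : exp (-2 ^ 2 / 2) = exp (-a ^ 2 / 2) * exp ((a ^ 2 - 4) / 2) := by
    rw [← exp_add]; ring_nf
  have hpos : 0 < (√(2 * π))⁻¹ * exp (-a ^ 2 / 2) := by positivity
  simp only [stdGaussDensity, hsplit]
  nlinarith [mul_le_mul_of_nonneg_left hgrowth hpos.le]

lemma stdGaussDensity_two_lt : stdGaussDensity 2 < 1 / 10 := by
  have he : 7 < exp 2 := by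
    have := exp_one_gt_d9
    rw [show (2 : ℝ) = 1 + 1 by norm_num, exp_add]
    nlinarith
  have hs : 2 < √(2 * π) := (lt_sqrt zero_le_two).2 (by nlinarith [pi_gt_three])
  rw [stdGaussDensity, show -(2 : ℝ) ^ 2 / 2 = -2 by norm_num, exp_neg, ← mul_inv,
    inv_lt_comm₀ (by positivity) (by norm_num)]
  nlinarith

lemma sq_mul_setIntegral_Ioi_stdGaussDensity_lt {L : ℝ} (hL : 2 ≤ L) :
    L ^ 2 * ∫ x in Ioi L, stdGaussDensity x < 1 / 4 := by
  have hmills := mul_le_mul_of_nonneg_left (mul_setIntegral_Ioi_stdGaussDensity_le L)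
    (by linarith : 0 ≤ L)
  nlinarith [mul_stdGaussDensity_le hL, stdGaussDensity_two_lt]

lemma setIntegral_compl_Icc_stdGaussDensity {L : ℝ} (hL : 0 ≤ L) :
    ∫ x in (Icc (-L) L)ᶜ, stdGaussDensity x = 2 * ∫ x in Ioi L, stdGaussDensity x := by
  have hcompl : (Icc (-L) L)ᶜ = Iio (-L) ∪ Ioi L := by
    ext x; simp only [mem_compl_iff, mem_Icc, not_and_or, not_le, mem_union, mem_Iio, mem_Ioi]
  have hdisj : Disjoint (Iio (-L)) (Ioi L) :=
    (Iic_disjoint_Ioi (by linarith)).mono_left Iio_subset_Iic_self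
  rw [hcompl, setIntegral_union hdisj measurableSet_Ioi
    integrable_stdGaussDensity.integrableOn integrable_stdGaussDensity.integrableOn,
    ← integral_Iic_eq_integral_Iio, ← integral_comp_neg_Ioi]
  simp only [stdGaussDensity_neg]
  ring

lemma setIntegral_Icc_stdGaussDensity {L : ℝ} (hL : 0 ≤ L) :
    ∫ x in Icc (-L) L, stdGaussDensity x = 1 - 2 * ∫ x in Ioi L, stdGaussDensity x := by
  rw [← setIntegral_compl_Icc_stdGaussDensity hL, ← integral_stdGaussDensity,
    ← integral_add_compl measurableSet_Icc integrable_stdGaussDensity]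
  ring

lemma intervalIntegral_sq_mul_stdGaussDensity (a b : ℝ) :
    ∫ x in a..b, x ^ 2 * stdGaussDensity x
      = (∫ x in a..b, stdGaussDensity x) + a * stdGaussDensity a - b * stdGaussDensity b := by
  have hderiv : ∀ x ∈ uIcc a b, HasDerivAt (fun y => -(y * stdGaussDensity y))
      (x ^ 2 * stdGaussDensity x - stdGaussDensity x) x := fun x _ =>
    ((hasDerivAt_id x).mul (hasDerivAt_stdGaussDensity x)).neg.congr_deriv (by simp; ring)
  have hcont : Continuous fun x => x ^ 2 * stdGaussDensity x :=
    (continuous_pow 2).mul continuous_stdGaussDensity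
  have hparts := intervalIntegral.integral_eq_sub_of_hasDerivAt hderiv
    ((hcont.sub continuous_stdGaussDensity).intervalIntegrable a b)
  rw [intervalIntegral.integral_sub (hcont.intervalIntegrable a b)
    (continuous_stdGaussDensity.intervalIntegrable a b)] at hparts
  linarith

lemma setIntegral_Icc_sq_mul_stdGaussDensity {L : ℝ} (hL : 0 ≤ L) :
    ∫ x in Icc (-L) L, x ^ 2 * stdGaussDensity x
      = 1 - 2 * (∫ x in Ioi L, stdGaussDensity x) - 2 * L * stdGaussDensity L := by
  have hle : -L ≤ L := by linarith
  rw [integral_Icc_eq_integral_Ioc, ← intervalIntegral.integral_of_le hle,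
    intervalIntegral_sq_mul_stdGaussDensity, intervalIntegral.integral_of_le hle,
    ← integral_Icc_eq_integral_Ioc, setIntegral_Icc_stdGaussDensity hL, stdGaussDensity_neg]
  ring

lemma one_half_lt_setIntegral_Icc_sq_mul_stdGaussDensity {L : ℝ} (hL : 2 ≤ L) :
    1 / 2 < ∫ x in Icc (-L) L, x ^ 2 * stdGaussDensity x := by
  have hmills := mul_setIntegral_Ioi_stdGaussDensity_le L
  have htail : 0 ≤ ∫ x in Ioi L, stdGaussDensity x :=
    setIntegral_nonneg measurableSet_Ioi fun x _ => stdGaussDensity_nonneg x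
  have hφ := stdGaussDensity_nonneg L
  rw [setIntegral_Icc_sq_mul_stdGaussDensity (by linarith)]
  nlinarith [mul_stdGaussDensity_le hL, stdGaussDensity_two_lt]

lemma integral_ite_abs_le {f g : ℝ → ℝ} {L : ℝ} (hf : IntegrableOn f (Icc (-L) L))
    (hg : IntegrableOn g (Icc (-L) L)ᶜ) :
    ∫ x, (if |x| ≤ L then f x else g x)
      = (∫ x in Icc (-L) L, f x) + ∫ x in (Icc (-L) L)ᶜ, g x := by
  classical
  rw [← integral_piecewise measurableSet_Icc hf hg]
  simp only [piecewise, mem_Icc, abs_le]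

section Counterexample

variable {M L : ℝ} {g' g'' : ℝ → ℝ}

lemma integral_stdGaussDensity_mul_neg_one_add_sq
    (hg'' : ∀ x : ℝ, g'' x = if |x| ≤ L then -M else 1) :
    ∫ x, stdGaussDensity x * (-1 + g'' x) ^ 2
      = (M + 1) ^ 2 * ∫ x in Icc (-L) L, stdGaussDensity x := by
  have h : ∀ x, stdGaussDensity x * (-1 + g'' x) ^ 2
      = if |x| ≤ L then (M + 1) ^ 2 * stdGaussDensity x else 0 := by
    intro x; rw [hg'']; split_ifs <;> ring
  simp_rw [h]
  rw [integral_ite_abs_le (continuous_stdGaussDensity.const_mul _).integrableOn_Icc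
    integrableOn_zero, integral_const_mul, integral_zero, add_zero]

lemma integral_stdGaussDensity_mul_mul_neg_add_sq (hL : 0 ≤ L)
    (hg' : ∀ x : ℝ, g' x =
      if |x| ≤ L then -M * x
      else if L < x then x - (M + 1) * L
      else x + (M + 1) * L)
    (hg'' : ∀ x : ℝ, g'' x = if |x| ≤ L then -M else 1) :
    ∫ x, stdGaussDensity x * (g'' x * (-x + g' x) ^ 2)
      = -M * (M + 1) ^ 2 * (∫ x in Icc (-L) L, x ^ 2 * stdGaussDensity x)
        + 2 * (M + 1) ^ 2 * L ^ 2 * ∫ x in Ioi L, stdGaussDensity x := by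
  have h : ∀ x, stdGaussDensity x * (g'' x * (-x + g' x) ^ 2)
      = if |x| ≤ L then -M * (M + 1) ^ 2 * (x ^ 2 * stdGaussDensity x)
        else (M + 1) ^ 2 * L ^ 2 * stdGaussDensity x := by
    intro x; rw [hg'', hg']; split_ifs <;> ring
  have hcont : Continuous fun x => x ^ 2 * stdGaussDensity x :=
    (continuous_pow 2).mul continuous_stdGaussDensity
  simp_rw [h]
  rw [integral_ite_abs_le (hcont.const_mul _).integrableOn_Icc
    (integrable_stdGaussDensity.const_mul _).integrableOn, integral_const_mul,
    integral_const_mul, setIntegral_compl_Icc_stdGaussDensity hL]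
  ring

end Counterexample

/-- The time derivative at `t = 0` of `FI(ρ_t‖ν_t)` along the heat flow in the
DPI counterexample: `D = -E[(-1+g''(X))²] - 2E[g''(X)(-X+g'(X))²]` with
`X ∼ N(0,1)` satisfies
`D ≥ -(M+1)² + 2M(M+1)² E[X²1{|X|≤L}] - 4(M+1)²L² P(X>L) > (M-2)(M+1)² ≥ 0`. -/
theorem counterexample_fisherInfo_derivative_positive
    (M L : ℝ) (hM : 2 ≤ M) (hL : 2 ≤ L)
    (g' g'' : ℝ → ℝ)
    (hg' : ∀ x : ℝ, g' x =
      if |x| ≤ L then -M * x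
      else if L < x then x - (M + 1) * L
      else x + (M + 1) * L)
    (hg'' : ∀ x : ℝ, g'' x = if |x| ≤ L then -M else 1)
    (D : ℝ)
    (hD : D = -(∫ x : ℝ, stdGaussDensity x * (-1 + g'' x) ^ 2)
        - 2 * ∫ x : ℝ, stdGaussDensity x * (g'' x * (-x + g' x) ^ 2)) :
    D ≥ -(M + 1) ^ 2
        + 2 * M * (M + 1) ^ 2 * (∫ x in Set.Icc (-L) L, x ^ 2 * stdGaussDensity x)
        - 4 * (M + 1) ^ 2 * L ^ 2 * (∫ x in Set.Ioi L, stdGaussDensity x) ∧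
    -(M + 1) ^ 2
        + 2 * M * (M + 1) ^ 2 * (∫ x in Set.Icc (-L) L, x ^ 2 * stdGaussDensity x)
        - 4 * (M + 1) ^ 2 * L ^ 2 * (∫ x in Set.Ioi L, stdGaussDensity x)
      > (M - 2) * (M + 1) ^ 2 ∧
    (M - 2) * (M + 1) ^ 2 ≥ 0 := by
  have hL0 : 0 ≤ L := by linarith
  set I := ∫ x in Icc (-L) L, x ^ 2 * stdGaussDensity x
  set T := ∫ x in Ioi L, stdGaussDensity x
  have hP : ∫ x in Icc (-L) L, stdGaussDensity x ≤ 1 := integral_stdGaussDensity ▸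
    setIntegral_le_integral integrable_stdGaussDensity (.of_forall stdGaussDensity_nonneg)
  have hI := one_half_lt_setIntegral_Icc_sq_mul_stdGaussDensity hL
  have hT := sq_mul_setIntegral_Ioi_stdGaussDensity_lt hL
  rw [integral_stdGaussDensity_mul_neg_one_add_sq hg'',
    integral_stdGaussDensity_mul_mul_neg_add_sq hL0 hg' hg''] at hD
  have hM1 : 0 < (M + 1) ^ 2 := by positivity
  refine ⟨?_, ?_, mul_nonneg (by linarith) hM1.le⟩
  · nlinarith [mul_le_mul_of_nonneg_left hP hM1.le]
  · nlinarith [mul_pos hM1 (by nlinarith : 0 < 2 * M * (I - 1 / 2) + (1 - 4 * (L ^ 2 * T)))]
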